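/- Let r: S^n × [0,T) → (0,∞) be smooth and satisfy ∂_t r(ξ,t) = −θ(t) f(x) r^{n+2} K /(φ(r) u) + r(ξ,t), where θ(t) = ∫_{S^n} φ(r(ξ,t)) dξ / ∫_{S^n} f dx, and the change of variables between the radial parametrization ξ and normal parametrization x satisfies dx/dξ = r^{n+1}K/u. Then the functional V_φ(Ω_t) = ∫_{S^n} ∫_0^{r(ξ,t)} φ(s)/s ds dξ is constant in t. -/

import Mathlib

/-!
Put `Φ(y) = ∫₀^y φ(s)/s ds`. Along the flow `∂ₜ Φ(r) = (φ(r)/r) ∂ₜ r = φ(r) - θ f(x) r^{n+1} K / u`,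
and by the Jacobian identity the last term integrates over `S^n` to `θ ∫ f dx = ∫ φ(r) dξ`.
Hence `V_φ(Ω_t)` has zero derivative on `(0,T)`, and being continuous it is constant on `[0,T)`.
-/

open Metric MeasureTheory Set

theorem hasDerivAt_intervalIntegral_of_continuousOn_Ioi {g : ℝ → ℝ} (hg : ContinuousOn g (Ioi 0))
    {y : ℝ} (hint : IntervalIntegrable g volume 0 y) (hy : 0 < y) :
    HasDerivAt (fun z => ∫ s in (0:ℝ)..z, g s) (g y) y :=
  intervalIntegral.integral_hasDerivAt_right hint
    (hg.stronglyMeasurableAtFilter isOpen_Ioi y hy) (hg.continuousAt (Ioi_mem_nhds hy))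

theorem hasDerivAt_intervalIntegral_div_self_comp_of_flow {φ ρ : ℝ → ℝ} {t θ F κ u : ℝ} {k : ℕ}
    (hφ : ContinuousOn φ (Ioi 0)) (hint : IntervalIntegrable (fun s => φ s / s) volume 0 (ρ t))
    (hρ : 0 < ρ t) (hφρ : φ (ρ t) ≠ 0) (hu : u ≠ 0)
    (hflow : HasDerivAt ρ (-θ * F * ρ t ^ (k+2) * κ / (φ (ρ t) * u) + ρ t) t) :
    HasDerivAt (fun τ => ∫ s in (0:ℝ)..ρ τ, φ s / s)
      (φ (ρ t) - θ * (F * ρ t ^ (k+1) * κ / u)) t := by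
  refine ((hasDerivAt_intervalIntegral_of_continuousOn_Ioi (g := fun s => φ s / s)
    (hφ.div continuousOn_id fun _ hs => ne_of_gt hs) hint hρ).comp t hflow).congr_deriv ?_
  field_simp
  ring

theorem integral_sub_mul_eq_zero_of_integral_eq {α : Type*} [MeasurableSpace α] {μ : Measure α}
    {v w F : α → ℝ} {θ : ℝ} (hv : Integrable v μ) (hw : Integrable w μ)
    (hwF : ∫ a, w a ∂μ = ∫ a, F a ∂μ) (hF : ∫ a, F a ∂μ ≠ 0)
    (hθ : θ = (∫ a, v a ∂μ) / ∫ a, F a ∂μ) :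
    ∫ a, (v a - θ * w a) ∂μ = 0 := by
  rw [integral_sub hv (hw.const_mul θ), integral_const_mul, hwF, hθ, div_mul_cancel₀ _ hF,
    sub_self]

section CompactSpace

variable {α : Type*} [TopologicalSpace α] [CompactSpace α] [MeasurableSpace α]
  [OpensMeasurableSpace α] {μ : Measure α} [IsFiniteMeasure μ]

theorem Continuous.integrable_of_compactSpace {g : α → ℝ} (hg : Continuous g) : Integrable g μ :=
  hg.integrable_of_hasCompactSupport (HasCompactSupport.of_compactSpace g)

theorem continuous_integral_of_continuous {g : α × ℝ → ℝ} (hg : Continuous g) :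
    Continuous fun t => ∫ a, g (a, t) ∂μ := by
  simpa only [Measure.restrict_univ] using
    continuous_parametric_integral_of_continuous (μ := μ) (f := fun t a => g (a, t))
      (hg.comp continuous_swap) isCompact_univ

theorem hasDerivAt_integral_of_continuous {g g' : α × ℝ → ℝ} (hg : Continuous g)
    (hg' : Continuous g') {U : Set ℝ} (hU : IsOpen U)
    (hderiv : ∀ a, ∀ t ∈ U, HasDerivAt (fun t => g (a, t)) (g' (a, t)) t) {t₀ : ℝ} (ht₀ : t₀ ∈ U) :
    HasDerivAt (fun t => ∫ a, g (a, t) ∂μ) (∫ a, g' (a, t₀) ∂μ) t₀ := by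
  obtain ⟨ε, hε, hball⟩ := Metric.isOpen_iff.1 hU t₀ ht₀
  obtain ⟨C, hC⟩ := (isCompact_univ.prod (isCompact_closedBall t₀ ε)).exists_bound_of_continuousOn
    hg'.continuousOn
  have hslice : ∀ {h : α × ℝ → ℝ}, Continuous h → ∀ t, Continuous fun a => h (a, t) :=
    fun hh t => hh.comp (Continuous.prodMk_left t)
  refine (hasDerivAt_integral_of_dominated_loc_of_deriv_le (bound := fun _ => C)
    (ball_mem_nhds t₀ hε) (.of_forall fun t => (hslice hg t).aestronglyMeasurable_of_compactSpace)
    (hslice hg t₀).integrable_of_compactSpace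
    (hslice hg' t₀).aestronglyMeasurable_of_compactSpace
    (.of_forall fun a t ht => hC (a, t) ⟨mem_univ a, ball_subset_closedBall ht⟩)
    (integrable_const C) (.of_forall fun a t ht => hderiv a t (hball ht))).2

theorem integral_eq_integral_zero_of_integral_deriv_eq_zero {T : ℝ} {g g' : α × ℝ → ℝ}
    (hg : Continuous g) (hg' : Continuous g')
    (hderiv : ∀ a, ∀ t ∈ Ioo 0 T, HasDerivAt (fun t => g (a, t)) (g' (a, t)) t)
    (hzero : ∀ t ∈ Ioo 0 T, ∫ a, g' (a, t) ∂μ = 0) :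
    ∀ t ∈ Ico 0 T, ∫ a, g (a, t) ∂μ = ∫ a, g (a, 0) ∂μ := by
  rintro t ⟨ht0, htT⟩
  rcases ht0.eq_or_lt with rfl | ht0
  · rfl
  obtain ⟨c, -, hc⟩ := exists_hasDerivAt_eq_slope (fun t => ∫ a, g (a, t) ∂μ) (fun _ => 0) ht0
    (continuous_integral_of_continuous hg).continuousOn fun s hs => by
      simpa only [hzero s ⟨hs.1, hs.2.trans htT⟩] using
        hasDerivAt_integral_of_continuous (μ := μ) hg hg' isOpen_Ioo hderiv ⟨hs.1, hs.2.trans htT⟩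
  rw [eq_comm, div_eq_zero_iff, sub_eq_zero, sub_eq_zero] at hc
  exact hc.resolve_right ht0.ne'

end CompactSpace

theorem integral_toSphere_pos {n : ℕ} {f : sphere (0 : EuclideanSpace ℝ (Fin (n+1))) 1 → ℝ}
    (hf : Continuous f) (hfpos : ∀ x, 0 < f x) :
    0 < ∫ x, f x ∂(volume : Measure (EuclideanSpace ℝ (Fin (n+1)))).toSphere :=
  have : Nonempty (sphere (0 : EuclideanSpace ℝ (Fin (n+1))) 1) :=
    (NormedSpace.sphere_nonempty.2 zero_le_one).to_subtype
  integral_pos_of_integrable_nonneg_nonzero hf hf.integrable_of_compactSpace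
    (fun x => (hfpos x).le) (hfpos (Classical.arbitrary _)).ne'

theorem V_phi_invariant_under_flow_general {n : ℕ} (T : ℝ)
    (φ : ℝ → ℝ) (hφcont : ContinuousOn φ (Set.Ioi 0))
    (hφpos : ∀ s > (0:ℝ), 0 < φ s)
    (hΦ : ∀ t > (0:ℝ), IntervalIntegrable (fun s => φ s / s) volume 0 t)
    (f : sphere (0 : EuclideanSpace ℝ (Fin (n+1))) 1 → ℝ)
    (hf : Continuous f) (hfpos : ∀ x, 0 < f x)
    (r u K : sphere (0 : EuclideanSpace ℝ (Fin (n+1))) 1 → ℝ → ℝ)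
    (xmap : sphere (0 : EuclideanSpace ℝ (Fin (n+1))) 1 → ℝ →
      sphere (0 : EuclideanSpace ℝ (Fin (n+1))) 1)
    (hrc : Continuous (fun p : sphere (0 : EuclideanSpace ℝ (Fin (n+1))) 1 × ℝ => r p.1 p.2))
    (huc : Continuous (fun p : sphere (0 : EuclideanSpace ℝ (Fin (n+1))) 1 × ℝ => u p.1 p.2))
    (hKc : Continuous (fun p : sphere (0 : EuclideanSpace ℝ (Fin (n+1))) 1 × ℝ => K p.1 p.2))
    (hxc : Continuous (fun p : sphere (0 : EuclideanSpace ℝ (Fin (n+1))) 1 × ℝ => xmap p.1 p.2))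
    (hrpos : ∀ ξ t, 0 < r ξ t) (hupos : ∀ ξ t, 0 < u ξ t)
    (θ : ℝ → ℝ)
    (hθ : ∀ t, θ t =
      (∫ ξ, φ (r ξ t) ∂(volume : Measure (EuclideanSpace ℝ (Fin (n+1)))).toSphere) /
      (∫ x, f x ∂(volume : Measure (EuclideanSpace ℝ (Fin (n+1)))).toSphere))
    (hflow : ∀ ξ, ∀ t ∈ Set.Ico (0:ℝ) T,
      HasDerivWithinAt (r ξ)
        (-θ t * f (xmap ξ t) * (r ξ t) ^ (n+2) * K ξ t / (φ (r ξ t) * u ξ t) + r ξ t)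
        (Set.Ico (0:ℝ) T) t)
    (hjac : ∀ t ∈ Set.Ico (0:ℝ) T,
      ∫ ξ, f (xmap ξ t) * (r ξ t) ^ (n+1) * K ξ t / u ξ t
          ∂(volume : Measure (EuclideanSpace ℝ (Fin (n+1)))).toSphere =
        ∫ x, f x ∂(volume : Measure (EuclideanSpace ℝ (Fin (n+1)))).toSphere) :
    ∀ t ∈ Set.Ico (0:ℝ) T,
      (∫ ξ, (∫ s in (0:ℝ)..(r ξ t), φ s / s)
          ∂(volume : Measure (EuclideanSpace ℝ (Fin (n+1)))).toSphere) =
      (∫ ξ, (∫ s in (0:ℝ)..(r ξ 0), φ s / s)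
          ∂(volume : Measure (EuclideanSpace ℝ (Fin (n+1)))).toSphere) := by
  have hφs : ContinuousOn (fun s => φ s / s) (Ioi 0) :=
    hφcont.div continuousOn_id fun _ hs => ne_of_gt hs
  have hΦc : ContinuousOn (fun y => ∫ s in (0:ℝ)..y, φ s / s) (Ioi 0) := fun y hy =>
    (hasDerivAt_intervalIntegral_of_continuousOn_Ioi hφs (hΦ y hy) hy).continuousAt
      |>.continuousWithinAt
  have hφr : Continuous fun p : sphere (0 : EuclideanSpace ℝ (Fin (n+1))) 1 × ℝ => φ (r p.1 p.2) :=
    hφcont.comp_continuous hrc fun p => hrpos p.1 p.2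
  have hθc : Continuous θ :=
    ((continuous_integral_of_continuous hφr).div_const _).congr fun t => (hθ t).symm
  have hwc : Continuous fun p : sphere (0 : EuclideanSpace ℝ (Fin (n+1))) 1 × ℝ =>
      f (xmap p.1 p.2) * r p.1 p.2 ^ (n+1) * K p.1 p.2 / u p.1 p.2 :=
    (((hf.comp hxc).mul (hrc.pow _)).mul hKc).div huc fun p => (hupos p.1 p.2).ne'
  refine integral_eq_integral_zero_of_integral_deriv_eq_zero
    (g' := fun p => φ (r p.1 p.2) - θ p.2 * (f (xmap p.1 p.2) * r p.1 p.2 ^ (n+1) * K p.1 p.2 /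
      u p.1 p.2))
    (hΦc.comp_continuous hrc fun p => hrpos p.1 p.2) (hφr.sub ((hθc.comp continuous_snd).mul hwc))
    (fun ξ t ht => ?_) (fun t ht => ?_)
  · exact hasDerivAt_intervalIntegral_div_self_comp_of_flow hφcont (hΦ _ (hrpos ξ t)) (hrpos ξ t)
      (hφpos _ (hrpos ξ t)).ne' (hupos ξ t).ne'
      ((hflow ξ t (Ioo_subset_Ico_self ht)).hasDerivAt (Ico_mem_nhds ht.1 ht.2))
  · exact integral_sub_mul_eq_zero_of_integral_eq
      (hφr.comp (.prodMk_left t)).integrable_of_compactSpace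
      (hwc.comp (.prodMk_left t)).integrable_of_compactSpace
      (hjac t (Ioo_subset_Ico_self ht)) (integral_toSphere_pos hf hfpos).ne' (hθ t)

/-- Conservation of the quantity `V_φ(Ω_t) = ∫_{S^n} ∫_0^{r(ξ,t)} φ(s)/s ds dξ`
along the normalized flow `∂_t r = -θ(t) f(x) r^{n+2} K / (φ(r) u) + r`, where
`θ(t) = ∫ φ(r) dξ / ∫ f dx`, `K` is the Gauss curvature, `u` the support
function, `xmap` the Gauss map (outer normal direction of the point with radial
direction `ξ`), and the change of variables `dx/dξ = r^{n+1} K / u` holds. -/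
theorem V_phi_invariant_under_flow {n : ℕ} (T : ℝ) (hT : 0 < T)
    (φ : ℝ → ℝ) (hφcont : ContinuousOn φ (Set.Ioi 0))
    (hφpos : ∀ s > (0:ℝ), 0 < φ s)
    (hΦ : ∀ t > (0:ℝ), IntervalIntegrable (fun s => φ s / s) volume 0 t)
    (f : sphere (0 : EuclideanSpace ℝ (Fin (n+1))) 1 → ℝ)
    (hf : Continuous f) (hfpos : ∀ x, 0 < f x)
    (r u K : sphere (0 : EuclideanSpace ℝ (Fin (n+1))) 1 → ℝ → ℝ)
    (xmap : sphere (0 : EuclideanSpace ℝ (Fin (n+1))) 1 → ℝ →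
      sphere (0 : EuclideanSpace ℝ (Fin (n+1))) 1)
    (hrc : Continuous (fun p : sphere (0 : EuclideanSpace ℝ (Fin (n+1))) 1 × ℝ => r p.1 p.2))
    (huc : Continuous (fun p : sphere (0 : EuclideanSpace ℝ (Fin (n+1))) 1 × ℝ => u p.1 p.2))
    (hKc : Continuous (fun p : sphere (0 : EuclideanSpace ℝ (Fin (n+1))) 1 × ℝ => K p.1 p.2))
    (hxc : Continuous (fun p : sphere (0 : EuclideanSpace ℝ (Fin (n+1))) 1 × ℝ => xmap p.1 p.2))
    (hrpos : ∀ ξ t, 0 < r ξ t) (hupos : ∀ ξ t, 0 < u ξ t) (hKpos : ∀ ξ t, 0 < K ξ t)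
    (θ : ℝ → ℝ)
    (hθ : ∀ t, θ t =
      (∫ ξ, φ (r ξ t) ∂(volume : Measure (EuclideanSpace ℝ (Fin (n+1)))).toSphere) /
      (∫ x, f x ∂(volume : Measure (EuclideanSpace ℝ (Fin (n+1)))).toSphere))
    (hflow : ∀ ξ, ∀ t ∈ Set.Ico (0:ℝ) T,
      HasDerivWithinAt (r ξ)
        (-θ t * f (xmap ξ t) * (r ξ t) ^ (n+2) * K ξ t / (φ (r ξ t) * u ξ t) + r ξ t)
        (Set.Ico (0:ℝ) T) t)
    (hjac : ∀ t ∈ Set.Ico (0:ℝ) T,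
      ∫ ξ, f (xmap ξ t) * (r ξ t) ^ (n+1) * K ξ t / u ξ t
          ∂(volume : Measure (EuclideanSpace ℝ (Fin (n+1)))).toSphere =
        ∫ x, f x ∂(volume : Measure (EuclideanSpace ℝ (Fin (n+1)))).toSphere) :
    ∀ t ∈ Set.Ico (0:ℝ) T,
      (∫ ξ, (∫ s in (0:ℝ)..(r ξ t), φ s / s)
          ∂(volume : Measure (EuclideanSpace ℝ (Fin (n+1)))).toSphere) =
      (∫ ξ, (∫ s in (0:ℝ)..(r ξ 0), φ s / s)
          ∂(volume : Measure (EuclideanSpace ℝ (Fin (n+1)))).toSphere) :=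
  V_phi_invariant_under_flow_general T φ hφcont hφpos hΦ f hf hfpos r u K xmap hrc huc hKc hxc hrpos
    hupos θ hθ hflow hjac
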